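/- Consider the recursions σ²_{i+1} = (1 + h²α²γ_i²σ_i²/σ²)^{-1} σ_i² with σ_1² = σ²/(P h²), and σ²_{i+1}(H) = (1 + H²α²γ_i²σ_i²(H)/σ²)^{-1} σ_i²(H) with σ_1²(H) = σ²/(P H²). If 0 < H ≤ |h|, then σ_i² ≤ σ_i²(H) for all i ≥ 1. -/

import Mathlib

/-!
Both recursions are iterates of `x ↦ x / (1 + c x)`, which is increasing in `x ≥ 0` and
decreasing in the gain `c ≥ 0`. Since `H² ≤ h²`, the sequence driven by `h` starts lower and
is contracted more strongly at every step, so it stays below the one driven by `H`.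
-/

noncomputable def varianceUpdate (c x : ℝ) : ℝ := (1 + c * x)⁻¹ * x

lemma varianceUpdate_eq_div (c x : ℝ) : varianceUpdate c x = x / (1 + c * x) := by
  rw [varianceUpdate, inv_mul_eq_div]

lemma varianceUpdate_anti_left {c c' x : ℝ} (hc' : 0 ≤ c') (hcc' : c' ≤ c) (hx : 0 ≤ x) :
    varianceUpdate c x ≤ varianceUpdate c' x := by
  rw [varianceUpdate, varianceUpdate]
  gcongr

lemma varianceUpdate_mono_right {c x y : ℝ} (hc : 0 ≤ c) (hx : 0 ≤ x) (hxy : x ≤ y) :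
    varianceUpdate c x ≤ varianceUpdate c y := by
  have hy : 0 ≤ y := hx.trans hxy
  rw [varianceUpdate_eq_div, varianceUpdate_eq_div, div_le_div_iff₀ (by positivity) (by positivity)]
  nlinarith

lemma le_of_varianceUpdate_recursion {s t a b : ℕ → ℝ} {i₀ : ℕ}
    (hs : ∀ i, i₀ ≤ i → 0 ≤ s i) (hb : ∀ i, i₀ ≤ i → 0 ≤ b i) (hba : ∀ i, i₀ ≤ i → b i ≤ a i)
    (hst₀ : s i₀ ≤ t i₀)
    (hsrec : ∀ i, i₀ ≤ i → s (i + 1) = varianceUpdate (a i) (s i))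
    (htrec : ∀ i, i₀ ≤ i → t (i + 1) = varianceUpdate (b i) (t i)) :
    ∀ i, i₀ ≤ i → s i ≤ t i := by
  intro i hi
  induction i, hi using Nat.le_induction with
  | base => exact hst₀
  | succ n hn ih =>
    calc s (n + 1) = varianceUpdate (a n) (s n) := hsrec n hn
      _ ≤ varianceUpdate (b n) (s n) := varianceUpdate_anti_left (hb n hn) (hba n hn) (hs n hn)
      _ ≤ varianceUpdate (b n) (t n) := varianceUpdate_mono_right (hb n hn) (hs n hn) ih
      _ = t (n + 1) := (htrec n hn).symm

theorem variance_recursion_monotone_general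
    (P σ2 α : ℝ) (hP : 0 < P) (hσ2 : 0 < σ2)
    (γ : ℕ → ℝ) (h H : ℝ) (hH : 0 < H) (hHh : H ≤ |h|)
    (s sH : ℕ → ℝ)
    (hspos : ∀ i, 1 ≤ i → 0 < s i)
    (hs1 : s 1 = σ2 / (P * h ^ 2)) (hsH1 : sH 1 = σ2 / (P * H ^ 2))
    (hsrec : ∀ i, 1 ≤ i →
      s (i + 1) = (1 + h ^ 2 * α ^ 2 * (γ i) ^ 2 * s i / σ2)⁻¹ * s i)
    (hsHrec : ∀ i, 1 ≤ i →
      sH (i + 1) = (1 + H ^ 2 * α ^ 2 * (γ i) ^ 2 * sH i / σ2)⁻¹ * sH i) :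
    ∀ i, 1 ≤ i → s i ≤ sH i := by
  have hHh2 : H ^ 2 ≤ h ^ 2 := sq_abs h ▸ pow_le_pow_left₀ hH.le hHh 2
  refine le_of_varianceUpdate_recursion (a := fun i ↦ h ^ 2 * α ^ 2 * γ i ^ 2 / σ2)
    (b := fun i ↦ H ^ 2 * α ^ 2 * γ i ^ 2 / σ2)
    (fun i hi ↦ (hspos i hi).le) (fun i _ ↦ by positivity) (fun i _ ↦ by gcongr) ?_
    (fun i hi ↦ by rw [hsrec i hi, varianceUpdate, div_mul_eq_mul_div])
    (fun i hi ↦ by rw [hsHrec i hi, varianceUpdate, div_mul_eq_mul_div])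
  rw [hs1, hsH1]
  gcongr

/-- Monotonicity of the variance recursion: if `0 < H ≤ |h|`, then the variance sequence
`σ_i²` driven by the true gain `h` is dominated by the pessimistic sequence `σ_i²(H)`. -/
theorem variance_recursion_monotone
    (P σ2 α : ℝ) (hP : 0 < P) (hσ2 : 0 < σ2) (hα : 0 < α)
    (γ : ℕ → ℝ) (h H : ℝ) (hh : h ≠ 0) (hH : 0 < H) (hHh : H ≤ |h|)
    (s sH : ℕ → ℝ)
    (hspos : ∀ i, 1 ≤ i → 0 < s i) (hsHpos : ∀ i, 1 ≤ i → 0 < sH i)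
    (hs1 : s 1 = σ2 / (P * h ^ 2)) (hsH1 : sH 1 = σ2 / (P * H ^ 2))
    (hsrec : ∀ i, 1 ≤ i →
      s (i + 1) = (1 + h ^ 2 * α ^ 2 * (γ i) ^ 2 * s i / σ2)⁻¹ * s i)
    (hsHrec : ∀ i, 1 ≤ i →
      sH (i + 1) = (1 + H ^ 2 * α ^ 2 * (γ i) ^ 2 * sH i / σ2)⁻¹ * sH i) :
    ∀ i, 1 ≤ i → s i ≤ sH i :=
  variance_recursion_monotone_general P σ2 α hP hσ2 γ h H hH hHh s sH hspos hs1 hsH1 hsrec hsHrec
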